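/- Let r* > 0, let g : (0, r*] → ℝ be nonnegative, nonincreasing, and integrable on (0, r*], and let s > 0 satisfy r* s ≥ π/2. Then ∫₀^{r*} g(r) cos(s r) dr ≤ ∫₀^{(π/2)/s} g(r) dr. -/

import Mathlib

/-!
Split the integral at `π / (2s)`. On the first piece `cos ≤ 1` and `g ≥ 0`. On the rest, after
scaling `s` to `1` and extending `g` by zero, the integral is a sum over periods
`[π/2, 5π/2] + 2πk`; on each period the second half-period shifted by `π` cancels the first one
up to `∫ (g x - g (x + π)) cos x`, which is `≤ 0` since `g` is antitone and `cos ≤ 0` on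
`[π/2, 3π/2]`.
-/

open Real MeasureTheory intervalIntegral Set

theorem integral_mul_cos_period_nonpos_of_antitoneOn {G : ℝ → ℝ}
    (hG : AntitoneOn G (Icc (π / 2) (π / 2 + 2 * π))) :
    ∫ x in (π / 2)..(π / 2 + 2 * π), G x * cos x ≤ 0 := by
  have hπ := pi_pos
  have hGcos : IntervalIntegrable (fun x => G x * cos x) volume (π / 2) (π / 2 + 2 * π) :=
    (hG.mono (uIcc_of_le (by linarith)).subset).intervalIntegrable.mul_continuousOn
      continuous_cos.continuousOn
  have hmid : π / 2 + π ∈ uIcc (π / 2) (π / 2 + 2 * π) := by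
    rw [uIcc_of_le (by linarith)]; constructor <;> linarith
  have hfirst := hGcos.mono_set (uIcc_subset_uIcc_left hmid)
  have hsecond := hGcos.mono_set (uIcc_subset_uIcc_right hmid)
  have hshift : IntervalIntegrable (fun x => G (x + π) * cos x) volume (π / 2) (π / 2 + π) := by
    refine AntitoneOn.intervalIntegrable ?_ |>.mul_continuousOn continuous_cos.continuousOn
    rw [uIcc_of_le (by linarith)]
    exact fun x hx y hy hxy => hG ⟨by linarith [hx.1], by linarith [hx.2]⟩
      ⟨by linarith [hy.1], by linarith [hy.2]⟩ (by linarith)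
  have hhalf : (∫ x in (π / 2 + π)..(π / 2 + 2 * π), G x * cos x)
      = -∫ x in (π / 2)..(π / 2 + π), G (x + π) * cos x := by
    rw [← intervalIntegral.integral_neg, show π / 2 + 2 * π = π / 2 + π + π by ring,
      ← integral_comp_add_right]
    simp [cos_add_pi]
  calc (∫ x in (π / 2)..(π / 2 + 2 * π), G x * cos x)
      = ∫ x in (π / 2)..(π / 2 + π), (G x - G (x + π)) * cos x := by
        simp_rw [sub_mul]
        rw [integral_sub hfirst hshift, ← integral_add_adjacent_intervals hfirst hsecond, hhalf,
          sub_eq_add_neg]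
    _ ≤ 0 := by
        simpa using integral_nonneg (f := fun x => -((G x - G (x + π)) * cos x))
          (by linarith) fun x hx => by
            have hGx : G (x + π) ≤ G x :=
              hG ⟨hx.1, by linarith [hx.2]⟩ ⟨by linarith [hx.1], by linarith [hx.2]⟩
                (by linarith)
            have hcos : cos x ≤ 0 := cos_nonpos_of_pi_div_two_le_of_le hx.1 (by linarith [hx.2])
            exact neg_nonneg.2 (mul_nonpos_of_nonneg_of_nonpos (sub_nonneg.2 hGx) hcos)

theorem integral_mul_cos_nonpos_of_antitoneOn_Ici {G : ℝ → ℝ} (hG : AntitoneOn G (Ici (π / 2)))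
    (n : ℕ) : ∫ x in (π / 2)..(π / 2 + 2 * π * n), G x * cos x ≤ 0 := by
  induction n generalizing G with
  | zero => simp
  | succ n ih =>
    have hπ := pi_pos
    have hintegrable : ∀ {b c}, π / 2 ≤ b → π / 2 ≤ c →
        IntervalIntegrable (fun x => G x * cos x) volume b c := fun hb hc =>
      (hG.mono fun x hx => le_trans (le_min hb hc) hx.1).intervalIntegrable.mul_continuousOn
        continuous_cos.continuousOn
    have hshift : AntitoneOn (fun x => G (x + 2 * π)) (Ici (π / 2)) := fun x hx y hy hxy =>
      hG (by simp only [mem_Ici] at hx ⊢; linarith) (by simp only [mem_Ici] at hy ⊢; linarith)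
        (by linarith)
    calc (∫ x in (π / 2)..(π / 2 + 2 * π * (n + 1 : ℕ)), G x * cos x)
        = (∫ x in (π / 2)..(π / 2 + 2 * π), G x * cos x)
          + ∫ x in (π / 2)..(π / 2 + 2 * π * n), G (x + 2 * π) * cos x := by
          rw [← integral_add_adjacent_intervals (b := π / 2 + 2 * π)
            (hintegrable le_rfl (by linarith))
            (hintegrable (by linarith) (by push_cast; nlinarith))]
          have hperiod := integral_comp_add_right (fun x => G x * cos x) (2 * π)
            (a := π / 2) (b := π / 2 + 2 * π * n)
          simp only [cos_add_two_pi] at hperiod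
          rw [hperiod]
          congr 2; push_cast; ring
      _ ≤ 0 := add_nonpos
          (integral_mul_cos_period_nonpos_of_antitoneOn (hG.mono Icc_subset_Ici_self)) (ih hshift)

theorem integral_mul_cos_nonpos_of_antitoneOn {g : ℝ → ℝ} {b : ℝ} (hb : π / 2 ≤ b)
    (hg0 : ∀ x ∈ Icc (π / 2) b, 0 ≤ g x) (hg : AntitoneOn g (Icc (π / 2) b)) :
    ∫ x in (π / 2)..b, g x * cos x ≤ 0 := by
  -- Extending `g` by zero beyond `b` keeps it antitone because `g ≥ 0`.
  set G : ℝ → ℝ := fun x => if x ≤ b then g x else 0 with hG_def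
  have hG : AntitoneOn G (Ici (π / 2)) := by
    intro x hx y hy hxy
    by_cases hyb : y ≤ b
    · simp only [hG_def, hyb, hxy.trans hyb, if_true]
      exact hg ⟨hx, hxy.trans hyb⟩ ⟨hy, hyb⟩ hxy
    · simp only [hG_def, hyb, if_false]
      split_ifs with hxb
      exacts [hg0 x ⟨hx, hxb⟩, le_rfl]
  obtain ⟨n, hn⟩ := exists_nat_ge ((b - π / 2) / (2 * π))
  have hbn : b ≤ π / 2 + 2 * π * n := by
    rw [div_le_iff₀ (by positivity)] at hn; linarith
  calc (∫ x in (π / 2)..b, g x * cos x)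
      = ∫ x in (π / 2)..b, G x * cos x :=
        integral_congr fun x hx => by
          rw [uIcc_of_le hb] at hx
          simp [hG_def, hx.2]
    _ = ∫ x in (π / 2)..(π / 2 + 2 * π * n), G x * cos x := by
        have hintegrable : ∀ {c d}, π / 2 ≤ c → π / 2 ≤ d →
            IntervalIntegrable (fun x => G x * cos x) volume c d := fun hc hd =>
          (hG.mono fun x hx => le_trans (le_min hc hd) hx.1).intervalIntegrable.mul_continuousOn
            continuous_cos.continuousOn
        have hzero : ∫ x in b..(π / 2 + 2 * π * n), G x * cos x = 0 :=
          integral_zero_ae <| Filter.Eventually.of_forall fun x hx => by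
            rw [uIoc_of_le hbn] at hx
            simp [hG_def, not_le.2 hx.1]
        rw [← integral_add_adjacent_intervals (hintegrable le_rfl hb)
          (hintegrable hb (hb.trans hbn)), hzero, add_zero]
    _ ≤ 0 := integral_mul_cos_nonpos_of_antitoneOn_Ici hG n

theorem integral_mul_cos_mul_nonpos_of_antitoneOn {g : ℝ → ℝ} {s b : ℝ} (hs : 0 < s)
    (hb : π / 2 / s ≤ b) (hg0 : ∀ r ∈ Icc (π / 2 / s) b, 0 ≤ g r)
    (hg : AntitoneOn g (Icc (π / 2 / s) b)) :
    ∫ r in (π / 2 / s)..b, g r * cos (s * r) ≤ 0 := by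
  have hmem : ∀ {x}, x ∈ Icc (π / 2) (s * b) → x / s ∈ Icc (π / 2 / s) b := fun hx =>
    ⟨div_le_div_of_nonneg_right hx.1 hs.le, (div_le_iff₀' hs).2 hx.2⟩
  have hscaled := integral_mul_cos_nonpos_of_antitoneOn (g := fun x => g (x / s))
    (by rwa [← div_le_iff₀' hs]) (fun x hx => hg0 _ (hmem hx))
    (fun x hx y hy hxy => hg (hmem hx) (hmem hy) (div_le_div_of_nonneg_right hxy hs.le))
  have hsubst :=
    integral_comp_mul_left (fun x => g (x / s) * cos x) hs.ne' (a := π / 2 / s) (b := b)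
  simp only [mul_div_cancel_left₀ _ hs.ne', mul_div_cancel₀ _ hs.ne', smul_eq_mul] at hsubst
  rw [hsubst]
  exact mul_nonpos_of_nonneg_of_nonpos (inv_nonneg.2 hs.le) hscaled

theorem integral_mul_cos_le_of_antitoneOn_Ioc (rs : ℝ) (g : ℝ → ℝ)
    (hnonneg : ∀ r ∈ Set.Ioc (0:ℝ) rs, 0 ≤ g r)
    (hanti : AntitoneOn g (Set.Ioc (0:ℝ) rs))
    (hint : IntervalIntegrable g volume 0 rs)
    (s : ℝ) (hs : 0 < s) (hrss : π / 2 ≤ rs * s) :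
    (∫ r in (0:ℝ)..rs, g r * Real.cos (s * r)) ≤ ∫ r in (0:ℝ)..(π / 2 / s), g r := by
  have ha : 0 < π / 2 / s := by positivity
  have hars : π / 2 / s ≤ rs := by rwa [div_le_iff₀ hs]
  have hIcc : Icc (π / 2 / s) rs ⊆ Ioc 0 rs := Icc_subset_Ioc_iff hars |>.2 ⟨ha, le_rfl⟩
  have hmid : π / 2 / s ∈ uIcc 0 rs := by rw [uIcc_of_le (ha.le.trans hars)]; exact ⟨ha.le, hars⟩
  have hhead := uIcc_subset_uIcc_left hmid
  have hgcos : IntervalIntegrable (fun r => g r * cos (s * r)) volume 0 rs :=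
    hint.mul_continuousOn (by fun_prop)
  rw [← integral_add_adjacent_intervals (hgcos.mono_set hhead)
    (hgcos.mono_set (uIcc_subset_uIcc_right hmid))]
  refine add_le_of_le_of_nonpos ?_ (integral_mul_cos_mul_nonpos_of_antitoneOn hs hars
    (fun r hr => hnonneg r (hIcc hr)) (hanti.mono hIcc))
  refine integral_mono_on_of_le_Ioo ha.le (hgcos.mono_set hhead)
    (hint.mono_set hhead) fun r hr => ?_
  exact mul_le_of_le_one_right (hnonneg r ⟨hr.1, hr.2.le.trans hars⟩) (cos_le_one _)
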